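/- Let α ∈ R and σ ∈ V⁰ with α + σ ∈ R. Then for every n ∈ ℤ, t̂_{α+nσ}^σ = t̂_α^σ, that is, ŵ_{α+(n+1)σ} ŵ_{α+nσ} = ŵ_{α+σ} ŵ_α. Moreover −α ∈ R and t̂_α^{−σ} = t̂_{−α}^σ, that is, ŵ_{α−σ} ŵ_α = ŵ_{−α+σ} ŵ_{−α}. -/

import Mathlib

/-- The reflection `s_α(u) = u - (u, α^∨) α` associated to a vector `α`, where
`α^∨ = 2α/(α,α)` and `B` is the bilinear form. -/
noncomputable def reflMap {V : Type*} [AddCommGroup V] [Module ℝ V] (B : V →ₗ[ℝ] V →ₗ[ℝ] ℝ)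
    (α : V) : V → V :=
  fun u => u - ((2 * B u α) / B α α) • α

/-- The defining relations of the presented group `Ŵ`: (I) `ŵ_α² = 1` and
(II) `ŵ_α ŵ_β ŵ_α = ŵ_{s_α(β)}` for `α, β ∈ R`. -/
def eawRels {V : Type*} [AddCommGroup V] [Module ℝ V] (B : V →ₗ[ℝ] V →ₗ[ℝ] ℝ)
    (R : Set V) : Set (FreeGroup R) :=
  {r | ∃ α : R, r = FreeGroup.of α * FreeGroup.of α} ∪
  {r | ∃ α β γ : R, (γ : V) = reflMap B (α : V) (β : V) ∧
        r = FreeGroup.of α * FreeGroup.of β * FreeGroup.of α * (FreeGroup.of γ)⁻¹}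

/-- The group `Ŵ` presented by generators `ŵ_α` (`α ∈ R`) and relations (I), (II). -/
abbrev EAW {V : Type*} [AddCommGroup V] [Module ℝ V] (B : V →ₗ[ℝ] V →ₗ[ℝ] ℝ)
    (R : Set V) :=
  PresentedGroup (eawRels B R)

/-- The generator `ŵ_α` of `Ŵ`. -/
def wgen {V : Type*} [AddCommGroup V] [Module ℝ V] (B : V →ₗ[ℝ] V →ₗ[ℝ] ℝ)
    (R : Set V) (α : V) (hα : α ∈ R) : EAW B R :=
  PresentedGroup.of (⟨α, hα⟩ : R)

/-- The element `t̂_α^σ = ŵ_{α+σ} ŵ_α` of `Ŵ`. -/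
def tgen {V : Type*} [AddCommGroup V] [Module ℝ V] (B : V →ₗ[ℝ] V →ₗ[ℝ] ℝ)
    (R : Set V) (α σ : V) (hα : α ∈ R) (hασ : α + σ ∈ R) : EAW B R :=
  wgen B R (α + σ) hασ * wgen B R α hα

/-!
On the line `α + ℤσ` the form is constant, since `σ` lies in the radical, so the reflection in
`α + mσ` sends `α + kσ` to `-(α + (2m - k)σ)`. Together with `ŵ_{-β} = ŵ_β` (as `s_β β = -β`) this
gives `ŵ_m ŵ_k ŵ_m = ŵ_{2m-k}` for `ŵ_n := ŵ_{α+nσ}`, whence `ŵ_{n+2} ŵ_{n+1} = ŵ_{n+1} ŵ_n`: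
the products `ŵ_{n+1} ŵ_n` do not depend on `n`.
-/

theorem Int.forall_of_two_mul_sub_closed {P : ℤ → Prop} (h0 : P 0) (h1 : P 1)
    (h : ∀ m k, P m → P k → P (2 * m - k)) (n : ℤ) : P n := by
  suffices ∀ n, P n ∧ P (n + 1) from (this n).1
  intro n
  induction n using Int.induction_on with
  | zero => simpa using And.intro h0 h1
  | succ i ih =>
    refine ⟨ih.2, ?_⟩
    convert h (i + 1) i ih.2 ih.1 using 1
    ring
  | pred i ih =>
    refine ⟨?_, by simpa using ih.1⟩
    convert h (-i) (-i + 1) ih.1 (by simpa using ih.2) using 1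
    ring

theorem mul_eq_of_two_mul_sub {G : Type*} [Group G] (w : ℤ → G)
    (hw : ∀ m k, w m * w k * w m = w (2 * m - k)) (n : ℤ) : w (n + 1) * w n = w 1 * w 0 := by
  have sq : ∀ m, w m * w m = 1 := fun m =>
    (mul_eq_right (b := w m)).1 (by rw [hw, two_mul, add_sub_cancel_right])
  have step : ∀ m, w (m + 2) * w (m + 1) = w (m + 1) * w m := fun m => by
    rw [← show 2 * (m + 1) - m = m + 2 by ring, ← hw, mul_assoc (w (m + 1) * w m), sq, mul_one]
  induction n using Int.induction_on with
  | zero => simp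
  | succ i ih => rw [add_assoc, one_add_one_eq_two, step, ih]
  | pred i ih =>
    have h := step (-i - 1)
    rw [sub_add_cancel, show -(i : ℤ) - 1 + 2 = -i + 1 by ring] at h
    rw [sub_add_cancel, ← h, ih]

section ReflectionGroup

variable {V : Type*} [AddCommGroup V] [Module ℝ V] (B : V →ₗ[ℝ] V →ₗ[ℝ] ℝ) {R : Set V}

theorem reflMap_self {β : V} (hβ : B β β ≠ 0) : reflMap B β β = -β := by
  rw [reflMap, mul_div_assoc, div_self hβ, mul_one]
  module

theorem neg_mem_of_reflMap_mem (hnon : ∀ α ∈ R, B α α ≠ 0)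
    (hclos : ∀ α ∈ R, ∀ β ∈ R, reflMap B α β ∈ R) {β : V} (hβ : β ∈ R) : -β ∈ R :=
  reflMap_self B (hnon β hβ) ▸ hclos β hβ β hβ

theorem wgen_congr {β γ : V} (hβ : β ∈ R) (hγ : γ ∈ R) (e : β = γ) :
    wgen B R β hβ = wgen B R γ hγ := by
  subst e
  rfl

theorem mk_eq_one_of_mem_eawRels {r : FreeGroup R} (h : r ∈ eawRels B R) :
    PresentedGroup.mk (eawRels B R) r = 1 :=
  (QuotientGroup.eq_one_iff _).2 (Subgroup.subset_normalClosure h)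

theorem wgen_mul_self {β : V} (hβ : β ∈ R) : wgen B R β hβ * wgen B R β hβ = 1 :=
  mk_eq_one_of_mem_eawRels B (Or.inl ⟨⟨β, hβ⟩, rfl⟩)

theorem wgen_mul_wgen_mul_wgen {β γ δ : V} (hβ : β ∈ R) (hγ : γ ∈ R) (hδ : δ ∈ R)
    (e : δ = reflMap B β γ) :
    wgen B R β hβ * wgen B R γ hγ * wgen B R β hβ = wgen B R δ hδ := by
  have h := mk_eq_one_of_mem_eawRels B (Or.inr ⟨⟨β, hβ⟩, ⟨γ, hγ⟩, ⟨δ, hδ⟩, e, rfl⟩)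
  rwa [map_mul, map_mul, map_mul, map_inv, mul_inv_eq_one] at h

theorem wgen_neg {β : V} (hβ : β ∈ R) (hβ' : B β β ≠ 0) (hnegβ : -β ∈ R) :
    wgen B R (-β) hnegβ = wgen B R β hβ := by
  rw [← wgen_mul_wgen_mul_wgen B hβ hβ hnegβ (reflMap_self B hβ').symm, mul_assoc,
    wgen_mul_self, mul_one]

end ReflectionGroup

section RadicalLine

variable {V : Type*} [AddCommGroup V] [Module ℝ V] {B : V →ₗ[ℝ] V →ₗ[ℝ] ℝ} {R : Set V}
  {α σ : V} (hσ : ∀ u, B σ u = 0) (hσ' : ∀ u, B u σ = 0)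
include hσ hσ'

theorem apply_add_zsmul_add_zsmul (m k : ℤ) : B (α + m • σ) (α + k • σ) = B α α := by
  simp [hσ, hσ']

theorem reflMap_add_zsmul (hα : B α α ≠ 0) (m k : ℤ) :
    reflMap B (α + m • σ) (α + k • σ) = -(α + (2 * m - k) • σ) := by
  rw [reflMap, apply_add_zsmul_add_zsmul hσ hσ', apply_add_zsmul_add_zsmul hσ hσ',
    mul_div_assoc, div_self hα, mul_one, sub_zsmul, mul_zsmul]
  module

variable (hnon : ∀ α ∈ R, B α α ≠ 0) (hclos : ∀ α ∈ R, ∀ β ∈ R, reflMap B α β ∈ R)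
  (hα : α ∈ R)
include hnon hclos hα

theorem add_zsmul_mem (hασ : α + σ ∈ R) (n : ℤ) : α + n • σ ∈ R := by
  refine Int.forall_of_two_mul_sub_closed (P := fun n : ℤ => α + n • σ ∈ R)
    (by simpa using hα) (by simpa using hασ) (fun m k hm hk => ?_) n
  simpa [reflMap_add_zsmul hσ hσ' (hnon α hα)] using
    neg_mem_of_reflMap_mem B hnon hclos (hclos _ hm _ hk)

theorem wgen_add_zsmul_reflect (hασ : α + σ ∈ R) (m k : ℤ) :
    wgen B R (α + m • σ) (add_zsmul_mem hσ hσ' hnon hclos hα hασ m) *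
        wgen B R (α + k • σ) (add_zsmul_mem hσ hσ' hnon hclos hα hασ k) *
        wgen B R (α + m • σ) (add_zsmul_mem hσ hσ' hnon hclos hα hασ m) =
      wgen B R (α + (2 * m - k) • σ) (add_zsmul_mem hσ hσ' hnon hclos hα hασ _) := by
  have hmem := add_zsmul_mem hσ hσ' hnon hclos hα hασ
  have hneg := neg_mem_of_reflMap_mem B hnon hclos (hmem (2 * m - k))
  rw [wgen_mul_wgen_mul_wgen B _ _ hneg (reflMap_add_zsmul hσ hσ' (hnon α hα) m k).symm,
    wgen_neg B _ (hnon _ (hmem _))]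

end RadicalLine

theorem tgen_translate_general {V : Type*} [AddCommGroup V] [Module ℝ V]
    (B : V →ₗ[ℝ] V →ₗ[ℝ] ℝ) (R : Set V)
    (hsym : ∀ u v : V, B u v = B v u)
    (hnon : ∀ α ∈ R, B α α ≠ 0)
    (hclos : ∀ α ∈ R, ∀ β ∈ R, reflMap B α β ∈ R)
    (α σ : V) (hα : α ∈ R) (hσ : ∀ u : V, B σ u = 0) (hασ : α + σ ∈ R) :
    (∀ n : ℤ, ∃ (h1 : α + (n + 1) • σ ∈ R) (h2 : α + n • σ ∈ R),
        wgen B R (α + (n + 1) • σ) h1 * wgen B R (α + n • σ) h2 =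
          wgen B R (α + σ) hασ * wgen B R α hα) ∧
      ∃ (hneg : -α ∈ R) (h3 : α - σ ∈ R) (h4 : -α + σ ∈ R),
        wgen B R (α - σ) h3 * wgen B R α hα =
          wgen B R (-α + σ) h4 * wgen B R (-α) hneg := by
  have hσ' : ∀ u, B u σ = 0 := fun u => (hsym u σ).trans (hσ u)
  have hmem := add_zsmul_mem hσ hσ' hnon hclos hα hασ
  have hnegα := neg_mem_of_reflMap_mem B hnon hclos hα
  have h3 : α - σ ∈ R := by simpa [sub_eq_add_neg] using hmem (-1)
  have h4 : -α + σ ∈ R := by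
    simpa [neg_add_eq_sub] using neg_mem_of_reflMap_mem B hnon hclos h3
  refine ⟨fun n => ⟨hmem (n + 1), hmem n, ?_⟩, hnegα, h3, h4, ?_⟩
  · have := mul_eq_of_two_mul_sub _ (wgen_add_zsmul_reflect hσ hσ' hnon hclos hα hασ) n
    rwa [wgen_congr B (hmem 1) hασ (by simp), wgen_congr B (hmem 0) hα (by simp)] at this
  · rw [wgen_congr B h4 (neg_mem_of_reflMap_mem B hnon hclos h3)
        (by rw [neg_sub, neg_add_eq_sub]), wgen_neg B h3 (hnon _ h3), wgen_neg B hα (hnon α hα)]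

/-- For `α ∈ R` and `σ` in the radical with `α + σ ∈ R`: for every `n ∈ ℤ`,
`t̂_{α+nσ}^σ = t̂_α^σ`, i.e. `ŵ_{α+(n+1)σ} ŵ_{α+nσ} = ŵ_{α+σ} ŵ_α`.  Moreover `−α ∈ R`
and `t̂_α^{−σ} = t̂_{−α}^σ`, i.e. `ŵ_{α−σ} ŵ_α = ŵ_{−α+σ} ŵ_{−α}`. -/
theorem tgen_translate {V : Type*} [AddCommGroup V] [Module ℝ V]
    (B : V →ₗ[ℝ] V →ₗ[ℝ] ℝ) (R : Set V)
    (hsym : ∀ u v : V, B u v = B v u)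
    (hpsd : ∀ v : V, 0 ≤ B v v)
    (hnon : ∀ α ∈ R, B α α ≠ 0)
    (hclos : ∀ α ∈ R, ∀ β ∈ R, reflMap B α β ∈ R)
    (α σ : V) (hα : α ∈ R) (hσ : ∀ u : V, B σ u = 0) (hασ : α + σ ∈ R) :
    (∀ n : ℤ, ∃ (h1 : α + (n + 1) • σ ∈ R) (h2 : α + n • σ ∈ R),
        wgen B R (α + (n + 1) • σ) h1 * wgen B R (α + n • σ) h2 =
          wgen B R (α + σ) hασ * wgen B R α hα) ∧
      ∃ (hneg : -α ∈ R) (h3 : α - σ ∈ R) (h4 : -α + σ ∈ R),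
        wgen B R (α - σ) h3 * wgen B R α hα =
          wgen B R (-α + σ) h4 * wgen B R (-α) hneg :=
  tgen_translate_general B R hsym hnon hclos α σ hα hσ hασ
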